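/- Let k be a field, g a Lie algebra over k, and X = k ⊕ g with Δ(a,x) = (a,x)⊗(1,0) + (1,0)⊗(0,x) and q((a,x)⊗(b,y)) = (ab, bx + [x,y]). Define R : X⊗X → X⊗X by R(u⊗v) = v⁽¹⁾ ⊗ q(u⊗v⁽²⁾) (Sweedler notation Δ(v) = v⁽¹⁾⊗v⁽²⁾); explicitly R((a,x)⊗(b,y)) = (b,y)⊗(a,x) + (1,0)⊗(0,[x,y]). Let φ : X⊗X → X be a BSD 2-cocycle (a BSD 2-cochain with δ²φ = 0) and define c_φ : X⊗X → X⊗X by c_φ(u⊗v) = v⁽¹⁾ ⊗ φ(u⊗v⁽²⁾). Then over the dual numbers k[ℏ] = k[T]/(T²), the k[ℏ]-linear map R̃ := R + ℏ·c_φ on X_ℏ ⊗ X_ℏ (X_ℏ = k[ℏ]⊗_k X) satisfies the Yang–Baxter equation (R̃⊗id)∘(id⊗R̃)∘(R̃⊗id) = (id⊗R̃)∘(R̃⊗id)∘(id⊗R̃); that is, R̃ is a Yang–Baxter deformation of R. -/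

import Mathlib

open TensorProduct

noncomputable section

variable (k : Type*) [Field k] (g : Type*) [LieRing g] [LieAlgebra k g]

/-- The comultiplication `Δ(a,x) = (a,x)⊗(1,0) + (1,0)⊗(0,x)` on `X = k ⊕ g`. -/
def Dmap : (k × g) →ₗ[k] (k × g) ⊗[k] (k × g) :=
  (TensorProduct.mk k (k × g) (k × g)).flip ((1 : k), (0 : g))
    + TensorProduct.mk k (k × g) (k × g) ((1 : k), (0 : g)) ∘ₗ
      (LinearMap.inr k k g ∘ₗ LinearMap.snd k k g)

/-- The Lie bracket of `g` as a bilinear map. -/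
def brk : g →ₗ[k] g →ₗ[k] g :=
  LinearMap.mk₂ k (fun x y => ⁅x, y⁆) add_lie smul_lie lie_add lie_smul

/-- The self-distributive map `q((a,x)⊗(b,y)) = (ab, b•x + ⁅x,y⁆)` on `X = k ⊕ g`. -/
def qmap : (k × g) ⊗[k] (k × g) →ₗ[k] (k × g) :=
  LinearMap.inl k k g ∘ₗ LinearMap.mul' k k ∘ₗ
      TensorProduct.map (LinearMap.fst k k g) (LinearMap.fst k k g)
    + LinearMap.inr k k g ∘ₗ
      ((TensorProduct.rid k g).toLinearMap ∘ₗ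
          TensorProduct.map (LinearMap.snd k k g) (LinearMap.fst k k g)
        + TensorProduct.lift (brk k g) ∘ₗ
          TensorProduct.map (LinearMap.snd k k g) (LinearMap.snd k k g))

/-- `f : X → X` is a coderivation of the coalgebra `X = k ⊕ g`. -/
def IsCoderivation (f : (k × g) →ₗ[k] (k × g)) : Prop :=
  Dmap k g ∘ₗ f
    = (TensorProduct.map f LinearMap.id + TensorProduct.map LinearMap.id f) ∘ₗ Dmap k g

/-- The BSD 2-cochain condition `Δ∘φ = (φ⊗q + q⊗φ)∘(id⊗τ⊗id)∘(Δ⊗Δ)`. -/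
def IsBSD2Cochain (φ : (k × g) ⊗[k] (k × g) →ₗ[k] (k × g)) : Prop :=
  Dmap k g ∘ₗ φ
    = (TensorProduct.map φ (qmap k g) + TensorProduct.map (qmap k g) φ) ∘ₗ
        (TensorProduct.tensorTensorTensorComm k (k × g) (k × g) (k × g) (k × g)).toLinearMap ∘ₗ
        TensorProduct.map (Dmap k g) (Dmap k g)

/-- `(u⊗v)⊗w ↦ (u⊗w⁽¹⁾)⊗(v⊗w⁽²⁾)`, the Sweedler-shuffling used in the BSD differential. -/
def Smap : ((k × g) ⊗[k] (k × g)) ⊗[k] (k × g) →ₗ[k]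
    ((k × g) ⊗[k] (k × g)) ⊗[k] ((k × g) ⊗[k] (k × g)) :=
  (TensorProduct.tensorTensorTensorComm k (k × g) (k × g) (k × g) (k × g)).toLinearMap ∘ₗ
    TensorProduct.map LinearMap.id (Dmap k g)

/-- The BSD first differential
`δ¹f(u⊗v) = f(q(u⊗v)) − q(f(u)⊗v) − q(u⊗f(v))`. -/
def bsdD1 (f : (k × g) →ₗ[k] (k × g)) : (k × g) ⊗[k] (k × g) →ₗ[k] (k × g) :=
  f ∘ₗ qmap k g - qmap k g ∘ₗ TensorProduct.map f LinearMap.id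
    - qmap k g ∘ₗ TensorProduct.map LinearMap.id f

/-- The BSD second differential
`δ²φ(u⊗v⊗w) = q(φ(u⊗v)⊗w) + φ(q(u⊗v)⊗w) − φ(q(u⊗w⁽¹⁾)⊗q(v⊗w⁽²⁾))`
`− q(φ(u⊗w⁽¹⁾)⊗q(v⊗w⁽²⁾)) − q(q(u⊗w⁽¹⁾)⊗φ(v⊗w⁽²⁾))`. -/
def bsdD2 (φ : (k × g) ⊗[k] (k × g) →ₗ[k] (k × g)) :
    ((k × g) ⊗[k] (k × g)) ⊗[k] (k × g) →ₗ[k] (k × g) :=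
  qmap k g ∘ₗ TensorProduct.map φ LinearMap.id
    + φ ∘ₗ TensorProduct.map (qmap k g) LinearMap.id
    - φ ∘ₗ TensorProduct.map (qmap k g) (qmap k g) ∘ₗ Smap k g
    - qmap k g ∘ₗ TensorProduct.map φ (qmap k g) ∘ₗ Smap k g
    - qmap k g ∘ₗ TensorProduct.map (qmap k g) φ ∘ₗ Smap k g

/-- The Yang–Baxter operator `R(u⊗v) = v⁽¹⁾ ⊗ q(u⊗v⁽²⁾)` associated to `g`. -/
def Rop : (k × g) ⊗[k] (k × g) →ₗ[k] (k × g) ⊗[k] (k × g) :=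
  TensorProduct.map LinearMap.id (qmap k g) ∘ₗ
    (TensorProduct.leftComm k (k × g) (k × g) (k × g)).toLinearMap ∘ₗ
    TensorProduct.map LinearMap.id (Dmap k g)

/-- `c_φ(u⊗v) = v⁽¹⁾ ⊗ φ(u⊗v⁽²⁾)`. -/
def cop (φ : (k × g) ⊗[k] (k × g) →ₗ[k] (k × g)) :
    (k × g) ⊗[k] (k × g) →ₗ[k] (k × g) ⊗[k] (k × g) :=
  TensorProduct.map LinearMap.id φ ∘ₗ
    (TensorProduct.leftComm k (k × g) (k × g) (k × g)).toLinearMap ∘ₗ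
    TensorProduct.map LinearMap.id (Dmap k g)

/-- The pair model of a `k[ℏ]`-linear map `F₀ + ℏ·F₁` (`ℏ² = 0`) between the scalar
extensions `M_ℏ = k[ℏ] ⊗ M` and `N_ℏ = k[ℏ] ⊗ N`, where `M_ℏ` is identified with `M × M`
via `(m₀, m₁) ↦ m₀ + ℏ·m₁`. -/
def eps {k : Type*} [Field k] {M N : Type*} [AddCommMonoid M] [Module k M]
    [AddCommMonoid N] [Module k N] (F₀ F₁ : M →ₗ[k] N) : M × M →ₗ[k] N × N :=
  LinearMap.prod (F₀ ∘ₗ LinearMap.fst k M M)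
    (F₀ ∘ₗ LinearMap.snd k M M + F₁ ∘ₗ LinearMap.fst k M M)


variable {k g}

lemma qmap_tmul (s t : k × g) :
    qmap k g (s ⊗ₜ[k] t) = (s.1 * t.1, t.1 • s.2 + ⁅s.2, t.2⁆) := by
  simp [qmap, brk]

lemma Dmap_apply (s : k × g) :
    Dmap k g s = s ⊗ₜ[k] ((1:k), (0:g)) + ((1:k),(0:g)) ⊗ₜ[k] ((0:k), s.2) := by
  simp [Dmap]

lemma Rop_tmul (s t : k × g) :
    Rop k g (s ⊗ₜ[k] t) = t ⊗ₜ[k] s + ((1:k),(0:g)) ⊗ₜ[k] ((0:k), ⁅s.2, t.2⁆) := by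
  simp [Rop, Dmap_apply, tmul_add, qmap_tmul]

lemma cop_tmul (φ : (k × g) ⊗[k] (k × g) →ₗ[k] (k × g)) (s t : k × g) :
    cop k g φ (s ⊗ₜ[k] t)
      = t ⊗ₜ[k] φ (s ⊗ₜ[k] ((1:k),(0:g))) + ((1:k),(0:g)) ⊗ₜ[k] φ (s ⊗ₜ[k] ((0:k), t.2)) := by
  simp [cop, Dmap_apply, tmul_add]

lemma jac (a b c : g) : ⁅⁅a,b⁆,c⁆ = ⁅⁅a,c⁆,b⁆ + ⁅a,⁅b,c⁆⁆ := by
  have j := lie_jacobi a b c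
  have e1 : ⁅b,⁅c,a⁆⁆ = -⁅b,⁅a,c⁆⁆ := by rw [← lie_skew a c, lie_neg, neg_neg]
  have e2 : ⁅⁅a,b⁆,c⁆ = ⁅a,⁅b,c⁆⁆ - ⁅b,⁅a,c⁆⁆ := lie_lie a b c
  have e3 : ⁅⁅a,c⁆,b⁆ = ⁅a,⁅c,b⁆⁆ - ⁅c,⁅a,b⁆⁆ := lie_lie a c b
  have e4 : ⁅a,⁅c,b⁆⁆ = -⁅a,⁅b,c⁆⁆ := by rw [← lie_skew b c, lie_neg, neg_neg]
  rw [e1] at j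
  rw [e2, e3, e4, ← sub_eq_zero, ← j]
  abel

lemma eps_comp {k : Type*} [Field k] {M N P : Type*} [AddCommMonoid M] [Module k M]
    [AddCommMonoid N] [Module k N] [AddCommMonoid P] [Module k P]
    (F₀ F₁ : N →ₗ[k] P) (G₀ G₁ : M →ₗ[k] N) :
    eps F₀ F₁ ∘ₗ eps G₀ G₁ = eps (F₀ ∘ₗ G₀) (F₀ ∘ₗ G₁ + F₁ ∘ₗ G₀) := by
  ext p <;> simp [eps]

set_option maxHeartbeats 1000000 in
lemma order0 :
    TensorProduct.map (Rop k g) LinearMap.id ∘ₗ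
      ((TensorProduct.assoc k (k×g) (k×g) (k×g)).symm.toLinearMap ∘ₗ
        TensorProduct.map LinearMap.id (Rop k g) ∘ₗ
        (TensorProduct.assoc k (k×g) (k×g) (k×g)).toLinearMap) ∘ₗ
      TensorProduct.map (Rop k g) LinearMap.id
    = ((TensorProduct.assoc k (k×g) (k×g) (k×g)).symm.toLinearMap ∘ₗ
        TensorProduct.map LinearMap.id (Rop k g) ∘ₗ
        (TensorProduct.assoc k (k×g) (k×g) (k×g)).toLinearMap) ∘ₗ
      TensorProduct.map (Rop k g) LinearMap.id ∘ₗ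
      ((TensorProduct.assoc k (k×g) (k×g) (k×g)).symm.toLinearMap ∘ₗ
        TensorProduct.map LinearMap.id (Rop k g) ∘ₗ
        (TensorProduct.assoc k (k×g) (k×g) (k×g)).toLinearMap) := by
  apply TensorProduct.ext_threefold
  intro u v w
  simp only [LinearMap.comp_apply, TensorProduct.map_tmul, LinearEquiv.coe_coe,
    TensorProduct.assoc_tmul, TensorProduct.assoc_symm_tmul, LinearMap.id_coe, id_eq,
    Rop_tmul, map_add, tmul_add, add_tmul]
  simp only [lie_zero, zero_lie, Prod.mk_zero_zero, tmul_zero, zero_tmul, add_zero]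
  rw [jac u.2 v.2 w.2,
    show ((0:k), ⁅⁅u.2,w.2⁆,v.2⁆ + ⁅u.2,⁅v.2,w.2⁆⁆) = ((0:k),⁅⁅u.2,w.2⁆,v.2⁆) + ((0:k),⁅u.2,⁅v.2,w.2⁆⁆)
      from by rw [Prod.mk_add_mk, add_zero], tmul_add]
  abel


variable {φ : (k × g) ⊗[k] (k × g) →ₗ[k] (k × g)}

lemma sym_zero (c : g) (h : ∀ x : g, x ⊗ₜ[k] c + c ⊗ₜ[k] x = (0 : g ⊗[k] g))
    (hnc : ∃ x y : g, ⁅x,y⁆ ≠ 0) : c = 0 := by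
  by_contra hc
  have : ¬ (∀ f : Module.Dual k g, f c = 0) := by
    rw [Module.forall_dual_apply_eq_zero_iff]; exact hc
  push_neg at this
  obtain ⟨f, hf⟩ := this
  have key : ∀ x : g, f x • c + f c • x = 0 := by
    intro x
    have h2 := congrArg ((TensorProduct.lid k g).toLinearMap ∘ₗ
      TensorProduct.map f (LinearMap.id : g →ₗ[k] g)) (h x)
    simpa using h2
  have hsp : ∀ x : g, x = ((f c)⁻¹ * f x) • (-c) := by
    intro x
    have hk := key x
    rw [add_eq_zero_iff_eq_neg] at hk
    have hk2 : f c • x = -(f x • c) := by rw [hk, neg_neg]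
    calc x = (f c)⁻¹ • (f c • x) := by rw [smul_smul, inv_mul_cancel₀ hf, one_smul]
    _ = (f c)⁻¹ • (-(f x • c)) := by rw [hk2]
    _ = ((f c)⁻¹ * f x) • (-c) := by rw [smul_neg, smul_smul, ← smul_neg]
  obtain ⟨x, y, hxy⟩ := hnc
  apply hxy
  rw [hsp x, hsp y, smul_lie, lie_smul, neg_lie, lie_neg, neg_neg, lie_self, smul_zero, smul_zero]

/-- functional s⊗t ↦ s.1 * t.1 on X⊗X -/
noncomputable def lam : (k × g) ⊗[k] (k × g) →ₗ[k] k :=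
  LinearMap.mul' k k ∘ₗ TensorProduct.map (LinearMap.fst k k g) (LinearMap.fst k k g)

@[simp] lemma lam_tmul (s t : k × g) : lam (s ⊗ₜ[k] t) = s.1 * t.1 := by
  simp [lam]

noncomputable def snd2 : (k × g) ⊗[k] (k × g) →ₗ[k] g ⊗[k] g :=
  TensorProduct.map (LinearMap.snd k k g) (LinearMap.snd k k g)

@[simp] lemma snd2_tmul (s t : k × g) : snd2 (s ⊗ₜ[k] t) = s.2 ⊗ₜ[k] t.2 := by
  simp [snd2]

section cochain
variable (hφ : IsBSD2Cochain k g φ)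
include hφ

lemma cochain_EE :
    φ (((1:k),(0:g)) ⊗ₜ[k] ((1:k),(0:g))) ⊗ₜ[k] ((1:k),(0:g))
      + ((1:k),(0:g)) ⊗ₜ[k] ((0:k), (φ (((1:k),(0:g)) ⊗ₜ[k] ((1:k),(0:g)))).2)
    = φ (((1:k),(0:g)) ⊗ₜ[k] ((1:k),(0:g))) ⊗ₜ[k] ((1:k),(0:g))
      + ((1:k),(0:g)) ⊗ₜ[k] φ (((1:k),(0:g)) ⊗ₜ[k] ((1:k),(0:g))) := by
  have h := LinearMap.congr_fun hφ ((((1:k),(0:g))) ⊗ₜ[k] (((1:k),(0:g))))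
  simpa only [LinearMap.comp_apply, LinearMap.add_apply, TensorProduct.map_tmul,
    LinearEquiv.coe_coe, TensorProduct.tensorTensorTensorComm_tmul, Dmap_apply, qmap_tmul,
    tmul_add, add_tmul, map_add, Prod.mk_zero_zero, tmul_zero, zero_tmul, map_zero,
    lie_zero, zero_lie, mul_one, one_mul, mul_zero, zero_mul, zero_smul, smul_zero,
    add_zero, zero_add, one_smul, Prod.mk.eta] using h

lemma A_fst : (φ (((1:k),(0:g)) ⊗ₜ[k] ((1:k),(0:g)))).1 = 0 := by
  have h := congrArg lam (cochain_EE hφ)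
  simp only [map_add, lam_tmul, mul_one, one_mul, add_zero] at h
  exact (left_eq_add.mp h)

end cochain

lemma aux_eta (x : k × g) (h : x.1 = 0) : ((0:k), x.2) = x := by
  rw [← h]

section cochain2
variable (hφ : IsBSD2Cochain k g φ)
include hφ

lemma cochain_yE (y : g) :
    φ (((0:k),y) ⊗ₜ[k] ((1:k),(0:g))) ⊗ₜ[k] ((1:k),(0:g))
      + ((1:k),(0:g)) ⊗ₜ[k] ((0:k), (φ (((0:k),y) ⊗ₜ[k] ((1:k),(0:g)))).2)
    = φ (((0:k),y) ⊗ₜ[k] ((1:k),(0:g))) ⊗ₜ[k] ((1:k),(0:g))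
      + ((0:k),y) ⊗ₜ[k] φ (((1:k),(0:g)) ⊗ₜ[k] ((1:k),(0:g)))
      + (φ (((1:k),(0:g)) ⊗ₜ[k] ((1:k),(0:g))) ⊗ₜ[k] ((0:k),y)
        + ((1:k),(0:g)) ⊗ₜ[k] φ (((0:k),y) ⊗ₜ[k] ((1:k),(0:g)))) := by
  have h := LinearMap.congr_fun hφ ((((0:k),y)) ⊗ₜ[k] (((1:k),(0:g))))
  simpa only [LinearMap.comp_apply, LinearMap.add_apply, TensorProduct.map_tmul,
    LinearEquiv.coe_coe, TensorProduct.tensorTensorTensorComm_tmul, Dmap_apply, qmap_tmul,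
    tmul_add, add_tmul, map_add, Prod.mk_zero_zero, tmul_zero, zero_tmul, map_zero,
    lie_zero, zero_lie, mul_one, one_mul, mul_zero, zero_mul, zero_smul, smul_zero,
    add_zero, zero_add, one_smul, Prod.mk.eta] using h

lemma P_fst (y : g) : (φ (((0:k),y) ⊗ₜ[k] ((1:k),(0:g)))).1 = 0 := by
  have h := congrArg lam (cochain_yE hφ y)
  simp only [map_add, lam_tmul, mul_one, one_mul, mul_zero, zero_mul, add_zero, zero_add] at h
  exact (left_eq_add.mp h)

lemma C0 (y : g) :
    ((0:k),y) ⊗ₜ[k] φ (((1:k),(0:g)) ⊗ₜ[k] ((1:k),(0:g)))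
      + φ (((1:k),(0:g)) ⊗ₜ[k] ((1:k),(0:g))) ⊗ₜ[k] ((0:k),y) = 0 := by
  have h := cochain_yE hφ y
  rw [aux_eta _ (P_fst hφ y)] at h
  rw [show ((0:k),y) ⊗ₜ[k] φ (((1:k),(0:g)) ⊗ₜ[k] ((1:k),(0:g)))
      + φ (((1:k),(0:g)) ⊗ₜ[k] ((1:k),(0:g))) ⊗ₜ[k] ((0:k),y)
    = (φ (((0:k),y) ⊗ₜ[k] ((1:k),(0:g))) ⊗ₜ[k] ((1:k),(0:g))
      + ((0:k),y) ⊗ₜ[k] φ (((1:k),(0:g)) ⊗ₜ[k] ((1:k),(0:g)))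
      + (φ (((1:k),(0:g)) ⊗ₜ[k] ((1:k),(0:g))) ⊗ₜ[k] ((0:k),y)
        + ((1:k),(0:g)) ⊗ₜ[k] φ (((0:k),y) ⊗ₜ[k] ((1:k),(0:g)))))
      - (φ (((0:k),y) ⊗ₜ[k] ((1:k),(0:g))) ⊗ₜ[k] ((1:k),(0:g))
      + ((1:k),(0:g)) ⊗ₜ[k] φ (((0:k),y) ⊗ₜ[k] ((1:k),(0:g)))) from by abel, ← h, sub_self]

end cochain2

lemma A_zero (hφ : IsBSD2Cochain k g φ) (hnc : ∃ x y : g, ⁅x,y⁆ ≠ 0) :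
    φ (((1:k),(0:g)) ⊗ₜ[k] ((1:k),(0:g))) = 0 := by
  have h2 : (φ (((1:k),(0:g)) ⊗ₜ[k] ((1:k),(0:g)))).2 = 0 := by
    refine sym_zero (k:=k) _ ?_ hnc
    intro y
    have := congrArg snd2 (C0 hφ y)
    simpa only [map_add, snd2_tmul, map_zero] using this
  have h1 := A_fst hφ
  rw [← aux_eta _ h1, h2, Prod.mk_zero_zero]

section cochain3
variable (hφ : IsBSD2Cochain k g φ)
include hφ

lemma cochain_Ez (z : g) :
    φ (((1:k),(0:g)) ⊗ₜ[k] ((0:k),z)) ⊗ₜ[k] ((1:k),(0:g))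
      + ((1:k),(0:g)) ⊗ₜ[k] ((0:k), (φ (((1:k),(0:g)) ⊗ₜ[k] ((0:k),z))).2)
    = φ (((1:k),(0:g)) ⊗ₜ[k] ((0:k),z)) ⊗ₜ[k] ((1:k),(0:g))
      + ((1:k),(0:g)) ⊗ₜ[k] φ (((1:k),(0:g)) ⊗ₜ[k] ((0:k),z)) := by
  have h := LinearMap.congr_fun hφ ((((1:k),(0:g))) ⊗ₜ[k] (((0:k),z)))
  simpa only [LinearMap.comp_apply, LinearMap.add_apply, TensorProduct.map_tmul,
    LinearEquiv.coe_coe, TensorProduct.tensorTensorTensorComm_tmul, Dmap_apply, qmap_tmul,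
    tmul_add, add_tmul, map_add, Prod.mk_zero_zero, tmul_zero, zero_tmul, map_zero,
    lie_zero, zero_lie, mul_one, one_mul, mul_zero, zero_mul, zero_smul, smul_zero,
    add_zero, zero_add, one_smul, Prod.mk.eta] using h

lemma Q_fst (z : g) : (φ (((1:k),(0:g)) ⊗ₜ[k] ((0:k),z))).1 = 0 := by
  have h := congrArg lam (cochain_Ez hφ z)
  simp only [map_add, lam_tmul, mul_one, one_mul, mul_zero, zero_mul, add_zero, zero_add] at h
  exact (left_eq_add.mp h)

lemma cochain_yz (y z : g) :
    φ (((0:k),y) ⊗ₜ[k] ((0:k),z)) ⊗ₜ[k] ((1:k),(0:g))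
      + ((1:k),(0:g)) ⊗ₜ[k] ((0:k), (φ (((0:k),y) ⊗ₜ[k] ((0:k),z))).2)
    = φ (((0:k),y) ⊗ₜ[k] ((0:k),z)) ⊗ₜ[k] ((1:k),(0:g))
      + ((0:k),⁅y,z⁆) ⊗ₜ[k] φ (((1:k),(0:g)) ⊗ₜ[k] ((1:k),(0:g)))
      + φ (((1:k),(0:g)) ⊗ₜ[k] ((0:k),z)) ⊗ₜ[k] ((0:k),y)
      + (((0:k),y) ⊗ₜ[k] φ (((1:k),(0:g)) ⊗ₜ[k] ((0:k),z))
        + (φ (((1:k),(0:g)) ⊗ₜ[k] ((1:k),(0:g))) ⊗ₜ[k] ((0:k),⁅y,z⁆)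
          + ((1:k),(0:g)) ⊗ₜ[k] φ (((0:k),y) ⊗ₜ[k] ((0:k),z)))) := by
  have h := LinearMap.congr_fun hφ ((((0:k),y)) ⊗ₜ[k] (((0:k),z)))
  simpa only [LinearMap.comp_apply, LinearMap.add_apply, TensorProduct.map_tmul,
    LinearEquiv.coe_coe, TensorProduct.tensorTensorTensorComm_tmul, Dmap_apply, qmap_tmul,
    tmul_add, add_tmul, map_add, Prod.mk_zero_zero, tmul_zero, zero_tmul, map_zero,
    lie_zero, zero_lie, mul_one, one_mul, mul_zero, zero_mul, zero_smul, smul_zero,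
    add_zero, zero_add, one_smul, Prod.mk.eta] using h

lemma S_fst (y z : g) : (φ (((0:k),y) ⊗ₜ[k] ((0:k),z))).1 = 0 := by
  have h := congrArg lam (cochain_yz hφ y z)
  simp only [map_add, lam_tmul, mul_one, one_mul, mul_zero, zero_mul, add_zero, zero_add] at h
  exact (left_eq_add.mp h)

lemma H_zero (hnc : ∃ x y : g, ⁅x,y⁆ ≠ 0) (z : g) :
    φ (((1:k),(0:g)) ⊗ₜ[k] ((0:k),z)) = 0 := by
  have h2 : (φ (((1:k),(0:g)) ⊗ₜ[k] ((0:k),z))).2 = 0 := by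
    refine sym_zero (k:=k) _ ?_ hnc
    intro y
    have h := cochain_yz hφ y z
    rw [A_zero hφ hnc] at h
    simp only [tmul_zero, zero_tmul, add_zero, zero_add] at h
    rw [aux_eta _ (S_fst hφ y z)] at h
    have key : ((0:k),y) ⊗ₜ[k] φ (((1:k),(0:g)) ⊗ₜ[k] ((0:k),z))
        + φ (((1:k),(0:g)) ⊗ₜ[k] ((0:k),z)) ⊗ₜ[k] ((0:k),y) = 0 := by
      rw [show ((0:k),y) ⊗ₜ[k] φ (((1:k),(0:g)) ⊗ₜ[k] ((0:k),z))
          + φ (((1:k),(0:g)) ⊗ₜ[k] ((0:k),z)) ⊗ₜ[k] ((0:k),y)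
        = (φ (((0:k),y) ⊗ₜ[k] ((0:k),z)) ⊗ₜ[k] ((1:k),(0:g))
          + φ (((1:k),(0:g)) ⊗ₜ[k] ((0:k),z)) ⊗ₜ[k] ((0:k),y)
          + (((0:k),y) ⊗ₜ[k] φ (((1:k),(0:g)) ⊗ₜ[k] ((0:k),z))
            + ((1:k),(0:g)) ⊗ₜ[k] φ (((0:k),y) ⊗ₜ[k] ((0:k),z))))
          - (φ (((0:k),y) ⊗ₜ[k] ((0:k),z)) ⊗ₜ[k] ((1:k),(0:g))
            + ((1:k),(0:g)) ⊗ₜ[k] φ (((0:k),y) ⊗ₜ[k] ((0:k),z))) from by abel, ← h, sub_self]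
    have := congrArg snd2 key
    simpa only [map_add, snd2_tmul, map_zero] using this
  have h1 := Q_fst hφ z
  rw [← aux_eta _ h1, h2, Prod.mk_zero_zero]

end cochain3

lemma phiE_red (hA : φ (((1:k),(0:g)) ⊗ₜ[k] ((1:k),(0:g))) = 0) (v : k × g) :
    φ (v ⊗ₜ[k] ((1:k),(0:g))) = φ (((0:k),v.2) ⊗ₜ[k] ((1:k),(0:g))) := by
  have dec : v ⊗ₜ[k] ((1:k),(0:g))
      = v.1 • (((1:k),(0:g)) ⊗ₜ[k] ((1:k),(0:g))) + ((0:k),v.2) ⊗ₜ[k] ((1:k),(0:g)) := by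
    rw [smul_tmul', ← add_tmul]
    congr 1
    ext <;> simp
  rw [dec, map_add, map_smul, hA, smul_zero, zero_add]

lemma phinu_red (hH : ∀ z : g, φ (((1:k),(0:g)) ⊗ₜ[k] ((0:k),z)) = 0) (v : k × g) (z : g) :
    φ (v ⊗ₜ[k] ((0:k),z)) = φ (((0:k),v.2) ⊗ₜ[k] ((0:k),z)) := by
  have dec : v ⊗ₜ[k] ((0:k),z)
      = v.1 • (((1:k),(0:g)) ⊗ₜ[k] ((0:k),z)) + ((0:k),v.2) ⊗ₜ[k] ((0:k),z) := by
    rw [smul_tmul', ← add_tmul]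
    congr 1
    ext <;> simp
  rw [dec, map_add, map_smul, hH z, smul_zero, zero_add]


section cocy
variable (hφ : IsBSD2Cochain k g φ) (hcocycle : bsdD2 k g φ = 0)
  (hnc : ∃ x y : g, ⁅x,y⁆ ≠ 0)
include hφ hcocycle hnc

lemma rel_i1 (y z : g) :
    φ (((0:k),⁅y,z⁆) ⊗ₜ[k] ((1:k),(0:g)))
      = ((0:k), ⁅(φ (((0:k),y) ⊗ₜ[k] ((1:k),(0:g)))).2, z⁆)
        + ((0:k), ⁅y, (φ (((0:k),z) ⊗ₜ[k] ((1:k),(0:g)))).2⁆) := by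
  have h := LinearMap.congr_fun hcocycle ((((0:k),y) ⊗ₜ[k] ((0:k),z)) ⊗ₜ[k] (((1:k),(0:g))))
  simp only [bsdD2, Smap] at h
  simp only [LinearMap.comp_apply, LinearMap.add_apply, LinearMap.sub_apply, LinearMap.zero_apply,
    TensorProduct.map_tmul, LinearEquiv.coe_coe, TensorProduct.tensorTensorTensorComm_tmul,
    Dmap_apply, qmap_tmul, tmul_add, add_tmul, map_add, Prod.mk_zero_zero, tmul_zero, zero_tmul,
    map_zero, lie_zero, zero_lie, mul_one, one_mul, mul_zero, zero_mul, zero_smul, smul_zero,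
    add_zero, zero_add, one_smul, Prod.mk.eta, LinearMap.id_coe, id_eq,
    P_fst hφ] at h
  rw [← sub_eq_zero, ← h]
  abel

lemma rel_i2 (y z : g) :
    ((0:k), ⁅(φ (((0:k),y) ⊗ₜ[k] ((1:k),(0:g)))).2, z⁆)
      = φ (((0:k),⁅y,z⁆) ⊗ₜ[k] ((1:k),(0:g))) := by
  have h := LinearMap.congr_fun hcocycle ((((0:k),y) ⊗ₜ[k] (((1:k),(0:g)))) ⊗ₜ[k] ((0:k),z))
  simp only [bsdD2, Smap] at h
  simp only [LinearMap.comp_apply, LinearMap.add_apply, LinearMap.sub_apply, LinearMap.zero_apply,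
    TensorProduct.map_tmul, LinearEquiv.coe_coe, TensorProduct.tensorTensorTensorComm_tmul,
    Dmap_apply, qmap_tmul, tmul_add, add_tmul, map_add, Prod.mk_zero_zero, tmul_zero, zero_tmul,
    map_zero, lie_zero, zero_lie, mul_one, one_mul, mul_zero, zero_mul, zero_smul, smul_zero,
    add_zero, zero_add, one_smul, Prod.mk.eta, LinearMap.id_coe, id_eq,
    P_fst hφ, A_zero hφ hnc, H_zero hφ hnc] at h
  rw [← sub_eq_zero, ← h]
  abel

lemma cen0 (y z : g) : ⁅y, (φ (((0:k),z) ⊗ₜ[k] ((1:k),(0:g)))).2⁆ = 0 := by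
  have h := rel_i1 hφ hcocycle hnc y z
  rw [← rel_i2 hφ hcocycle hnc y z] at h
  have h2 := congrArg Prod.snd (left_eq_add.mp h)
  simpa using h2

lemma cen2 (v : k × g) (z : g) : ⁅z, (φ (v ⊗ₜ[k] ((1:k),(0:g)))).2⁆ = 0 := by
  rw [phiE_red (A_zero hφ hnc) v]
  exact cen0 hφ hcocycle hnc z v.2

lemma cen1 (v : k × g) (z : g) : ⁅(φ (v ⊗ₜ[k] ((1:k),(0:g)))).2, z⁆ = 0 := by
  rw [← lie_skew, cen2 hφ hcocycle hnc, neg_zero]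

lemma phib (y z : g) : φ (((0:k),⁅y,z⁆) ⊗ₜ[k] ((1:k),(0:g))) = 0 := by
  rw [← rel_i2 hφ hcocycle hnc y z]
  have := cen1 hφ hcocycle hnc ((0:k),y) z
  rw [this, Prod.mk_zero_zero]

end cocy


lemma rel_i3 (hφ : IsBSD2Cochain k g φ) (hcocycle : bsdD2 k g φ = 0)
    (hnc : ∃ x y : g, ⁅x,y⁆ ≠ 0) (u v w : k × g) :
    φ (((0:k), ⁅u.2, v.2⁆) ⊗ₜ[k] ((0:k), w.2))
      = φ (((0:k), ⁅u.2, w.2⁆) ⊗ₜ[k] ((0:k), v.2))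
        + φ (u ⊗ₜ[k] ((0:k), ⁅v.2, w.2⁆))
        + ((0:k), ⁅(φ (u ⊗ₜ[k] ((0:k), w.2))).2, v.2⁆)
        + ((0:k), ⁅u.2, (φ (((0:k), v.2) ⊗ₜ[k] ((0:k), w.2))).2⁆)
        - ((0:k), ⁅(φ (u ⊗ₜ[k] ((0:k), v.2))).2, w.2⁆) := by
  have h := LinearMap.congr_fun hcocycle ((u ⊗ₜ[k] ((0:k),v.2)) ⊗ₜ[k] ((0:k),w.2))
  simp only [bsdD2, Smap] at h
  simp only [LinearMap.comp_apply, LinearMap.add_apply, LinearMap.sub_apply, LinearMap.zero_apply,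
    TensorProduct.map_tmul, LinearEquiv.coe_coe, TensorProduct.tensorTensorTensorComm_tmul,
    Dmap_apply, qmap_tmul, tmul_add, add_tmul, map_add, Prod.mk_zero_zero, tmul_zero, zero_tmul,
    map_zero, lie_zero, zero_lie, mul_one, one_mul, mul_zero, zero_mul, zero_smul, smul_zero,
    add_zero, zero_add, one_smul, Prod.mk.eta, LinearMap.id_coe, id_eq,
    P_fst hφ, S_fst hφ, A_zero hφ hnc, H_zero hφ hnc,
    cen1 hφ hcocycle hnc, cen2 hφ hcocycle hnc] at h
  rw [← sub_eq_zero, ← h]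
  abel

set_option maxHeartbeats 1600000 in
lemma order1 (φ : (k × g) ⊗[k] (k × g) →ₗ[k] (k × g))
    (hφ : IsBSD2Cochain k g φ) (hcocycle : bsdD2 k g φ = 0) :
    TensorProduct.map (Rop k g) LinearMap.id ∘ₗ
        (((TensorProduct.assoc k (k × g) (k × g) (k × g)).symm.toLinearMap ∘ₗ
              TensorProduct.map LinearMap.id (Rop k g) ∘ₗ (TensorProduct.assoc k (k × g) (k × g) (k × g)).toLinearMap) ∘ₗ
            TensorProduct.map (cop k g φ) LinearMap.id +
          ((TensorProduct.assoc k (k × g) (k × g) (k × g)).symm.toLinearMap ∘ₗ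
              TensorProduct.map LinearMap.id (cop k g φ) ∘ₗ (TensorProduct.assoc k (k × g) (k × g) (k × g)).toLinearMap) ∘ₗ
            TensorProduct.map (Rop k g) LinearMap.id) +
      TensorProduct.map (cop k g φ) LinearMap.id ∘ₗ
        ((TensorProduct.assoc k (k × g) (k × g) (k × g)).symm.toLinearMap ∘ₗ
            TensorProduct.map LinearMap.id (Rop k g) ∘ₗ (TensorProduct.assoc k (k × g) (k × g) (k × g)).toLinearMap) ∘ₗ
          TensorProduct.map (Rop k g) LinearMap.id =
    ((TensorProduct.assoc k (k × g) (k × g) (k × g)).symm.toLinearMap ∘ₗ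
          TensorProduct.map LinearMap.id (Rop k g) ∘ₗ (TensorProduct.assoc k (k × g) (k × g) (k × g)).toLinearMap) ∘ₗ
        (TensorProduct.map (Rop k g) LinearMap.id ∘ₗ
            (TensorProduct.assoc k (k × g) (k × g) (k × g)).symm.toLinearMap ∘ₗ
              TensorProduct.map LinearMap.id (cop k g φ) ∘ₗ (TensorProduct.assoc k (k × g) (k × g) (k × g)).toLinearMap +
          TensorProduct.map (cop k g φ) LinearMap.id ∘ₗ
            (TensorProduct.assoc k (k × g) (k × g) (k × g)).symm.toLinearMap ∘ₗ
              TensorProduct.map LinearMap.id (Rop k g) ∘ₗ (TensorProduct.assoc k (k × g) (k × g) (k × g)).toLinearMap) +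
      ((TensorProduct.assoc k (k × g) (k × g) (k × g)).symm.toLinearMap ∘ₗ
          TensorProduct.map LinearMap.id (cop k g φ) ∘ₗ (TensorProduct.assoc k (k × g) (k × g) (k × g)).toLinearMap) ∘ₗ
        TensorProduct.map (Rop k g) LinearMap.id ∘ₗ
          (TensorProduct.assoc k (k × g) (k × g) (k × g)).symm.toLinearMap ∘ₗ
            TensorProduct.map LinearMap.id (Rop k g) ∘ₗ (TensorProduct.assoc k (k × g) (k × g) (k × g)).toLinearMap := by
  apply TensorProduct.ext_threefold
  intro u v w
  simp only [LinearMap.add_apply, LinearMap.comp_apply, TensorProduct.map_tmul,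
    LinearEquiv.coe_coe, TensorProduct.assoc_tmul, TensorProduct.assoc_symm_tmul,
    LinearMap.id_coe, id_eq, Rop_tmul, cop_tmul, map_add, tmul_add, add_tmul]
  by_cases hab : ∀ x y : g, ⁅x,y⁆ = (0:g)
  · simp only [hab, Prod.mk_zero_zero, tmul_zero, zero_tmul, map_zero, add_zero, zero_add]
    abel
  · push_neg at hab
    have hnc : ∃ x y : g, ⁅x,y⁆ ≠ 0 := hab
    simp only [lie_zero, zero_lie, Prod.mk_zero_zero, Prod.snd_zero, Prod.fst_zero,
      tmul_zero, zero_tmul, map_zero, add_zero, zero_add,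
      A_zero hφ hnc, H_zero hφ hnc, phib hφ hcocycle hnc,
      cen1 hφ hcocycle hnc, cen2 hφ hcocycle hnc]
    rw [phinu_red (H_zero hφ hnc) v w.2]
    rw [rel_i3 hφ hcocycle hnc u v w]
    simp only [tmul_add, tmul_sub]
    abel

/-- If `φ` is a BSD 2-cocycle, then `R̃ = R + ℏ·c_φ` (pair model `eps (Rop) (cop φ)` over
the dual numbers) satisfies the Yang–Baxter equation
`(R̃⊗id)∘(id⊗R̃)∘(R̃⊗id) = (id⊗R̃)∘(R̃⊗id)∘(id⊗R̃)` on `X_ℏ^{⊗3}`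
(grouped as `(X⊗X)⊗X`; `id⊗R̃` is conjugated by the canonical associator), and
`R̃ − R` has vanishing order-zero part, i.e. `R̃` is a Yang–Baxter deformation of `R`. -/
theorem stmt18 {k : Type*} [Field k] {g : Type*} [LieRing g] [LieAlgebra k g]
    (φ : (k × g) ⊗[k] (k × g) →ₗ[k] (k × g))
    (hφ : IsBSD2Cochain k g φ) (hcocycle : bsdD2 k g φ = 0) :
    (eps (TensorProduct.map (Rop k g) (LinearMap.id : (k × g) →ₗ[k] (k × g)))
        (TensorProduct.map (cop k g φ) (LinearMap.id : (k × g) →ₗ[k] (k × g))) ∘ₗ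
      eps ((TensorProduct.assoc k (k × g) (k × g) (k × g)).symm.toLinearMap ∘ₗ
            TensorProduct.map (LinearMap.id : (k × g) →ₗ[k] (k × g)) (Rop k g) ∘ₗ
            (TensorProduct.assoc k (k × g) (k × g) (k × g)).toLinearMap)
          ((TensorProduct.assoc k (k × g) (k × g) (k × g)).symm.toLinearMap ∘ₗ
            TensorProduct.map (LinearMap.id : (k × g) →ₗ[k] (k × g)) (cop k g φ) ∘ₗ
            (TensorProduct.assoc k (k × g) (k × g) (k × g)).toLinearMap) ∘ₗ
      eps (TensorProduct.map (Rop k g) (LinearMap.id : (k × g) →ₗ[k] (k × g)))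
        (TensorProduct.map (cop k g φ) (LinearMap.id : (k × g) →ₗ[k] (k × g)))
      = eps ((TensorProduct.assoc k (k × g) (k × g) (k × g)).symm.toLinearMap ∘ₗ
            TensorProduct.map (LinearMap.id : (k × g) →ₗ[k] (k × g)) (Rop k g) ∘ₗ
            (TensorProduct.assoc k (k × g) (k × g) (k × g)).toLinearMap)
          ((TensorProduct.assoc k (k × g) (k × g) (k × g)).symm.toLinearMap ∘ₗ
            TensorProduct.map (LinearMap.id : (k × g) →ₗ[k] (k × g)) (cop k g φ) ∘ₗ
            (TensorProduct.assoc k (k × g) (k × g) (k × g)).toLinearMap) ∘ₗ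
        eps (TensorProduct.map (Rop k g) (LinearMap.id : (k × g) →ₗ[k] (k × g)))
          (TensorProduct.map (cop k g φ) (LinearMap.id : (k × g) →ₗ[k] (k × g))) ∘ₗ
        eps ((TensorProduct.assoc k (k × g) (k × g) (k × g)).symm.toLinearMap ∘ₗ
            TensorProduct.map (LinearMap.id : (k × g) →ₗ[k] (k × g)) (Rop k g) ∘ₗ
            (TensorProduct.assoc k (k × g) (k × g) (k × g)).toLinearMap)
          ((TensorProduct.assoc k (k × g) (k × g) (k × g)).symm.toLinearMap ∘ₗ
            TensorProduct.map (LinearMap.id : (k × g) →ₗ[k] (k × g)) (cop k g φ) ∘ₗ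
            (TensorProduct.assoc k (k × g) (k × g) (k × g)).toLinearMap))
    ∧ ∀ p : ((k × g) ⊗[k] (k × g)) × ((k × g) ⊗[k] (k × g)),
        ((eps (Rop k g) (cop k g φ) - eps (Rop k g) 0) p).1 = 0 := by
  constructor
  · rw [eps_comp, eps_comp, eps_comp, eps_comp]
    congr 1
    · exact order0
    · exact order1 φ hφ hcocycle
  · intro p
    simp [eps]

end
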